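/- Let ε⁰, ε¹ be independent N(0, I_ℓ) Gaussian vectors and let B : Fin ℓ → Fin 2 be a random selector independent of (ε⁰, ε¹) with arbitrary distribution. Then Mix(B, [ε⁰, ε¹]) is distributed as N(0, I_ℓ) and is independent of B. -/

import Mathlib

/-!
For a fixed selector `b`, the map `x ↦ (x (b j) j)_j` picks every output coordinate from exactly
one factor of the product measure `⨂ₖ ⨂ⱼ μⱼ`, so it pushes that measure forward to `⨂ⱼ μⱼ`,
whatever `b` is. As `B` is independent of the noise, `(B, Mix)` is the image of
`Law(B) ⊗ Law(noise)` under the skew product `(b, x) ↦ (b, mix b x)`, whose fibre maps all send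
the noise law to `⨂ⱼ μⱼ`; hence `(B, Mix)` has law `Law(B) ⊗ ⨂ⱼ μⱼ`.
-/

open MeasureTheory ProbabilityTheory

namespace ProbabilityTheory

section Mix

variable {ι κ : Type*} {α : ι → Type*}

def mix (b : ι → κ) (x : κ → (j : ι) → α j) : (j : ι) → α j := fun j => x (b j) j

theorem mix_preimage_univ_pi [DecidableEq κ] (b : ι → κ) (s : (j : ι) → Set (α j)) :
    mix b ⁻¹' Set.univ.pi s
      = Set.univ.pi fun k => Set.univ.pi fun j => if b j = k then s j else Set.univ := by
  ext x
  simp only [Set.mem_preimage, Set.mem_univ_pi, mix]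
  refine ⟨fun h k j => ?_, fun h j => by simpa using h (b j) j⟩
  split_ifs with hj
  · exact hj ▸ h j
  · trivial

variable [∀ j, MeasurableSpace (α j)]

theorem measurable_mix (b : ι → κ) : Measurable (mix (α := α) b) :=
  measurable_pi_lambda _ fun j => (measurable_pi_apply j).comp (measurable_pi_apply (b j))

theorem measurable_uncurry_mix [MeasurableSpace κ] [Countable κ] [MeasurableSingletonClass κ] :
    Measurable (Function.uncurry (mix : (ι → κ) → (κ → (j : ι) → α j) → (j : ι) → α j)) := by
  refine measurable_pi_lambda _ fun j => ?_
  have hcoord : Measurable fun q : κ × (κ → (j : ι) → α j) => q.2 q.1 j :=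
    measurable_from_prod_countable_right fun k =>
      (measurable_pi_apply j).comp (measurable_pi_apply k)
  exact hcoord.comp (f := fun p : (ι → κ) × (κ → (j : ι) → α j) => (p.1 j, p.2)) (by fun_prop)

theorem map_mix_pi [Fintype ι] [Fintype κ] [DecidableEq κ] (μ : (j : ι) → Measure (α j))
    [∀ j, IsProbabilityMeasure (μ j)] (b : ι → κ) :
    (Measure.pi fun _ : κ => Measure.pi μ).map (mix b) = Measure.pi μ := by
  refine (Measure.pi_eq fun s hs => ?_).symm
  simp only [Measure.map_apply (measurable_mix b) (.univ_pi hs), mix_preimage_univ_pi,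
    Measure.pi_pi]
  rw [Finset.prod_comm]
  refine Finset.prod_congr rfl fun j _ => ?_
  simp [apply_ite (μ j)]

end Mix

theorem map_eq_and_indepFun_of_map_prodMk_eq_prod {Ω β γ : Type*} [MeasurableSpace Ω]
    [MeasurableSpace β] [MeasurableSpace γ] {P : Measure Ω} [IsProbabilityMeasure P]
    {X : Ω → β} {Y : Ω → γ} {ν : Measure γ} [SFinite ν] (hX : Measurable X) (hY : Measurable Y)
    (h : P.map (fun ω => (X ω, Y ω)) = (P.map X).prod ν) :
    P.map Y = ν ∧ IndepFun X Y P := by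
  have hY_law : P.map Y = ν := by
    have : IsProbabilityMeasure (P.map X) := Measure.isProbabilityMeasure_map hX.aemeasurable
    calc P.map Y = (P.map fun ω => (X ω, Y ω)).map Prod.snd :=
          (Measure.map_map measurable_snd (hX.prodMk hY)).symm
      _ = ν := by rw [h, Measure.map_snd_prod, measure_univ, one_smul]
  refine ⟨hY_law, ?_⟩
  rw [indepFun_iff_map_prod_eq_prod_map_map hX.aemeasurable hY.aemeasurable, h, hY_law]

end ProbabilityTheory

/-- mixing two independent standard Gaussian vectors according
to a random selector `B` independent of the noise yields a standard Gaussian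
vector that is moreover independent of `B`. -/
theorem stmt17 {ℓ : ℕ} {Ω : Type*} [MeasurableSpace Ω] (P : Measure Ω)
    [IsProbabilityMeasure P]
    (ε : Fin 2 → Ω → Fin ℓ → ℝ) (B : Ω → Fin ℓ → Fin 2)
    (hεmeas : ∀ i, Measurable (ε i)) (hBmeas : Measurable B)
    (hlaw : Measure.map (fun ω => fun i => ε i ω) P
      = Measure.pi fun _ : Fin 2 => Measure.pi fun _ : Fin ℓ => gaussianReal 0 1)
    (hindep : IndepFun B (fun ω => fun i => ε i ω) P) :
    Measure.map (fun ω => fun j => ε (B ω j) ω j) P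
      = Measure.pi (fun _ : Fin ℓ => gaussianReal 0 1) ∧
    IndepFun B (fun ω => fun j => ε (B ω j) ω j) P := by
  set E : Ω → Fin 2 → Fin ℓ → ℝ := fun ω i => ε i ω
  have hE : Measurable E := measurable_pi_lambda _ hεmeas
  have hBE : MeasurePreserving (fun ω => (B ω, E ω)) P ((P.map B).prod (P.map E)) :=
    ⟨hBmeas.prodMk hE, hindep.map_prod_eq_prod_map_map hBmeas.aemeasurable hE.aemeasurable⟩
  rw [hlaw] at hBE
  have hmix := (MeasurePreserving.id (P.map B)).skew_product measurable_uncurry_mix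
    (ae_of_all _ (map_mix_pi (fun _ : Fin ℓ => gaussianReal 0 1)))
  exact map_eq_and_indepFun_of_map_prodMk_eq_prod hBmeas
    (measurable_uncurry_mix.comp (hBmeas.prodMk hE)) (hmix.comp hBE).map_eq
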